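/- A finite group G is an A-group (all of its Sylow subgroups are abelian) if and only if Nil_G(x) = C_G(x) for every element x ∈ G of prime power order. -/

import Mathlib

/-- The nilpotent neighborhood of `x`: elements `y` such that `⟨x,y⟩` is nilpotent. -/
def nilNbhd {G : Type*} [Group G] (x : G) : Set G :=
  {y | Group.IsNilpotent ↥(Subgroup.closure ({x, y} : Set G))}

/-- The hypercenter of a finite group: the stable term of the upper central series. -/
noncomputable def hypercenter (G : Type*) [Group G] : Subgroup G :=
  upperCentralSeries G (Nat.card G)

instance hypercenter_normal (G : Type*) [Group G] : (hypercenter G).Normal :=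
  Subgroup.normal_of_characteristic (Subgroup.upperCentralSeries G (Nat.card G))

/-- The graph Γ(G): induced subgraph of the nilpotent graph on `G \ Z_∞(G)`. -/
def nilGraph (G : Type*) [Group G] : SimpleGraph {x : G // x ∉ hypercenter G} where
  Adj a b := a ≠ b ∧ Group.IsNilpotent ↥(Subgroup.closure ({a.1, b.1} : Set G))
  symm := ⟨fun a b ⟨h1, h2⟩ => ⟨h1.symm, by rwa [Set.pair_comm]⟩⟩
  loopless := ⟨fun a h => h.1 rfl⟩

/-- The commuting graph on the non-central elements. -/
def commGraph (G : Type*) [Group G] : SimpleGraph {x : G // x ∉ Subgroup.center G} where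
  Adj a b := a ≠ b ∧ a.1 * b.1 = b.1 * a.1
  symm := ⟨fun a b ⟨h1, h2⟩ => ⟨h1.symm, h2.symm⟩⟩
  loopless := ⟨fun a h => h.1 rfl⟩

/-- Diameter of a connected component: diameter of the induced subgraph on its support. -/
noncomputable def compDiam {V : Type*} (Γ : SimpleGraph V) (c : Γ.ConnectedComponent) : ℕ :=
  (Γ.induce c.supp).diam

/-- `H` is a Frobenius complement in `G`. -/
def IsFrobeniusComplement {G : Type*} [Group G] (H : Subgroup G) : Prop :=
  H ≠ ⊥ ∧ H ≠ ⊤ ∧ ∀ g : G, g ∉ H → H ⊓ H.map (MulAut.conj g).toMonoidHom = ⊥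

/-- `G` is a Frobenius group. -/
def IsFrobenius (G : Type*) [Group G] : Prop :=
  ∃ H : Subgroup G, IsFrobeniusComplement H

/-- `K` is the Frobenius kernel corresponding to the complement `H`. -/
def IsFrobeniusKernelOf {G : Type*} [Group G] (K H : Subgroup G) : Prop :=
  IsFrobeniusComplement H ∧
    (K : Set G) = {1} ∪ {x : G | ∀ g : G, x ∉ H.map (MulAut.conj g).toMonoidHom}

/-- `K` is a Frobenius kernel of `G`. -/
def IsFrobeniusKernel {G : Type*} [Group G] (K : Subgroup G) : Prop :=
  ∃ H : Subgroup G, IsFrobeniusKernelOf K H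

/-- `G` is a 2-Frobenius group. -/
def IsTwoFrobenius (G : Type*) [Group G] : Prop :=
  ∃ K L : Subgroup G, ∃ hK : K.Normal, L.Normal ∧ K ≤ L ∧
    IsFrobeniusKernel (K.subgroupOf L) ∧
    (haveI := hK; IsFrobeniusKernel (Subgroup.map (QuotientGroup.mk' K) L))

/-- The Fitting subgroup: the largest normal nilpotent subgroup (of a finite group). -/
def fitting (G : Type*) [Group G] : Subgroup G :=
  sSup {H : Subgroup G | H.Normal ∧ Group.IsNilpotent ↥H}

/-!
If all Sylow subgroups of `G` are abelian, so are those of any subgroup, and a finite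
nilpotent group is the direct product of its Sylow subgroups; hence a nilpotent `⟨x, y⟩`
is abelian and `x`, `y` commute. Conversely, two elements of a Sylow `p`-subgroup generate
a `p`-group, which is nilpotent; when one of them is nontrivial it has prime power order,
so the hypothesis makes them commute.
-/

def IsAGroup (G : Type*) [Group G] : Prop :=
  ∀ p : ℕ, p.Prime → ∀ P : Sylow p G, IsMulCommutative P

theorem IsAGroup.subgroup {G : Type*} [Group G] (hG : IsAGroup G) (H : Subgroup G) :
    IsAGroup H := by
  intro p hp Q
  have := Fact.mk hp
  obtain ⟨P, hQP⟩ := (Q.isPGroup'.map H.subtype).exists_le_sylow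
  have := hG p hp P
  exact .of_setLike_mul_comm fun a ha b hb =>
    Subtype.ext (setLike_mul_comm (s := (P : Subgroup G)) (hQP ⟨a, ha, rfl⟩) (hQP ⟨b, hb, rfl⟩))

theorem IsAGroup.isMulCommutative_of_isNilpotent {G : Type*} [Group G] [Finite G]
    (hG : IsAGroup G) [Group.IsNilpotent G] : IsMulCommutative G := by
  -- a finite nilpotent group is the direct product of its Sylow subgroups
  obtain ⟨e⟩ := ((Group.isNilpotent_of_finite_tfae (G := G)).out 0 4).mp ‹_›
  refine ⟨⟨fun a b => e.symm.injective ?_⟩⟩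
  funext p P
  have := hG p (Nat.prime_of_mem_primeFactors p.2) P
  simp only [map_mul, Pi.mul_apply]
  exact Subtype.ext (setLike_mul_comm (e.symm a p P).2 (e.symm b p P).2)

theorem Subgroup.isMulCommutative_closure_pair {G : Type*} [Group G] {x y : G}
    (h : Commute x y) : IsMulCommutative (closure {x, y}) := by
  refine isMulCommutative_closure ?_
  simp only [Set.mem_insert_iff, Set.mem_singleton_iff]
  rintro _ (rfl | rfl) _ (rfl | rfl) <;> first | rfl | exact h | exact h.symm

theorem centralizer_subset_nilNbhd {G : Type*} [Group G] (x : G) :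
    (Subgroup.centralizer {x} : Set G) ⊆ nilNbhd x := fun y hy => by
  have := Subgroup.isMulCommutative_closure_pair
    (Subgroup.mem_centralizer_singleton_iff.mp hy).symm
  exact ⟨1, Subgroup.upperCentralSeries_one_eq_top_iff.mpr ‹_›⟩

theorem IsAGroup.nilNbhd_eq_centralizer {G : Type*} [Group G] [Finite G] (hG : IsAGroup G)
    (x : G) : nilNbhd x = (Subgroup.centralizer {x} : Set G) := by
  refine Set.Subset.antisymm (fun y hy => ?_) (centralizer_subset_nilNbhd x)
  have : Group.IsNilpotent (Subgroup.closure ({x, y} : Set G)) := hy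
  have := (hG.subgroup (Subgroup.closure {x, y})).isMulCommutative_of_isNilpotent
  have hx : x ∈ Subgroup.closure {x, y} := Subgroup.subset_closure (Set.mem_insert x {y})
  have hy : y ∈ Subgroup.closure {x, y} := Subgroup.subset_closure (Set.mem_insert_of_mem x rfl)
  exact Subgroup.mem_centralizer_singleton_iff.mpr (setLike_mul_comm hy hx)

theorem IsPGroup.mem_nilNbhd {G : Type*} [Group G] {p : ℕ} [Fact p.Prime] {P : Subgroup G}
    [Finite P] (hP : IsPGroup p P) {x y : G} (hx : x ∈ P) (hy : y ∈ P) : y ∈ nilNbhd x := by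
  have hle : Subgroup.closure {x, y} ≤ P := (Subgroup.closure_le P).mpr (Set.pair_subset hx hy)
  have := Finite.of_injective _ (Subgroup.inclusion_injective hle)
  exact (hP.to_le hle).isNilpotent

theorem IsPGroup.isPrimePow_orderOf {G : Type*} [Group G] {p : ℕ} [hp : Fact p.Prime]
    (hG : IsPGroup p G) {x : G} (hx : x ≠ 1) : IsPrimePow (orderOf x) := by
  obtain ⟨k, hk⟩ := IsPGroup.iff_orderOf.mp hG x
  have hk0 : k ≠ 0 := by
    rintro rfl
    exact hx (orderOf_eq_one_iff.mp (by simpa using hk))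
  exact hk ▸ hp.out.isPrimePow.pow hk0

theorem isAGroup_of_nilNbhd_eq_centralizer {G : Type*} [Group G] [Finite G]
    (h : ∀ x : G, IsPrimePow (orderOf x) → nilNbhd x = (Subgroup.centralizer {x} : Set G)) :
    IsAGroup G := by
  intro p hp P
  have := Fact.mk hp
  refine .of_setLike_mul_comm fun a ha b hb => ?_
  rcases eq_or_ne a 1 with rfl | ha1
  · simp
  have hord : IsPrimePow (orderOf a) := by
    simpa using P.isPGroup'.isPrimePow_orderOf (x := ⟨a, ha⟩) (by simpa using ha1)
  have hab : b ∈ nilNbhd a := P.isPGroup'.mem_nilNbhd ha hb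
  rw [h a hord] at hab
  exact (Subgroup.mem_centralizer_singleton_iff.mp hab).symm

/-- A finite group is an A-group iff `Nil_G(x) = C_G(x)` for every `x` of prime power order. -/
theorem stmt_8 (G : Type*) [Group G] [Finite G] :
    (∀ (p : ℕ), p.Prime → ∀ P : Sylow p G, IsMulCommutative ↥(P : Subgroup G)) ↔
      ∀ x : G, IsPrimePow (orderOf x) →
        nilNbhd x = (Subgroup.centralizer {x} : Set G) :=
  ⟨fun hG x _ => IsAGroup.nilNbhd_eq_centralizer hG x, isAGroup_of_nilNbhd_eq_centralizer⟩
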